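/- For every nonempty compact convex set K ⊆ ℝ², the point ( (h_K(e_1) − h_K(−e_1))/2 , (h_K(e_2) − h_K(−e_2))/2 ) belongs to K; equivalently, the center of the smallest axis-parallel rectangle containing K lies in K. -/

import Mathlib

/-!
Let `p, q, r, s ∈ K` be points where the coordinates `x` and `y` attain their maximum and
minimum, so that `K` lies in the box they span and meets each of its four sides. If the box
center `c` were not in `K`, a functional `f = m x + n y` would separate it from `K`. Put the
box as `c + [-W, W] × [-H, H]`. Then `f (p - c) < 0` and `f (q - c) < 0` give `|m| W < |n| H`,
while `f (r - c) < 0` and `f (s - c) < 0` give `|n| H < |m| W`.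
-/

noncomputable def suppFn (K : Set (EuclideanSpace ℝ (Fin 2)))
    (x : EuclideanSpace ℝ (Fin 2)) : ℝ :=
  sSup ((fun y => (inner ℝ x y : ℝ)) '' K)

open EuclideanSpace

lemma abs_mul_lt_of_add_mul_neg {m n W H v v' : ℝ} (hv : |v| ≤ H) (hv' : |v'| ≤ H)
    (h : m * W + n * v < 0) (h' : -(m * W) + n * v' < 0) : |m * W| < |n| * H := by
  have hnv : |n * v| ≤ |n| * H := by rw [abs_mul]; gcongr
  have hnv' : |n * v'| ≤ |n| * H := by rw [abs_mul]; gcongr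
  rw [abs_lt]
  constructor <;> linarith [neg_abs_le (n * v), neg_abs_le (n * v')]

lemma map_eq_coord_mul (f : EuclideanSpace ℝ (Fin 2) →L[ℝ] ℝ)
    (y : EuclideanSpace ℝ (Fin 2)) :
    f y = y 0 * f (single 0 1) + y 1 * f (single 1 1) := by
  have hy : y = y 0 • single 0 1 + y 1 • single 1 1 := by
    ext i; fin_cases i <;> simp
  conv_lhs => rw [hy]
  simp

theorem box_center_mem {K : Set (EuclideanSpace ℝ (Fin 2))} (hconv : Convex ℝ K)
    (hclosed : IsClosed K) {p q r s c : EuclideanSpace ℝ (Fin 2)}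
    (hp : p ∈ K) (hq : q ∈ K) (hr : r ∈ K) (hs : s ∈ K)
    (hpmax : IsMaxOn (· 0) K p) (hqmin : IsMinOn (· 0) K q)
    (hrmax : IsMaxOn (· 1) K r) (hsmin : IsMinOn (· 1) K s)
    (hc0 : c 0 = (p 0 + q 0) / 2) (hc1 : c 1 = (r 1 + s 1) / 2) : c ∈ K := by
  by_contra hc
  obtain ⟨f, t, hfK, hfc⟩ := geometric_hahn_banach_closed_point hconv hclosed hc
  set m := f (single 0 1)
  set n := f (single 1 1)
  have hsep : ∀ y ∈ K, m * (y 0 - c 0) + n * (y 1 - c 1) < 0 := fun y hy => by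
    have hfy := hfK y hy
    rw [map_eq_coord_mul f y] at hfy
    rw [map_eq_coord_mul f c] at hfc
    linarith
  have hxbox : ∀ y ∈ K, |y 0 - c 0| ≤ (p 0 - q 0) / 2 := fun y hy => by
    have := isMaxOn_iff.mp hpmax y hy
    have := isMinOn_iff.mp hqmin y hy
    rw [abs_le]; constructor <;> linarith
  have hybox : ∀ y ∈ K, |y 1 - c 1| ≤ (r 1 - s 1) / 2 := fun y hy => by
    have := isMaxOn_iff.mp hrmax y hy
    have := isMinOn_iff.mp hsmin y hy
    rw [abs_le]; constructor <;> linarith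
  have hW : 0 ≤ (p 0 - q 0) / 2 := (abs_nonneg _).trans (hxbox p hp)
  have hH : 0 ≤ (r 1 - s 1) / 2 := (abs_nonneg _).trans (hybox r hr)
  have hmW : |m * ((p 0 - q 0) / 2)| < |n| * ((r 1 - s 1) / 2) :=
    abs_mul_lt_of_add_mul_neg (hybox p hp) (hybox q hq)
      (by convert hsep p hp using 3; rw [hc0]; ring)
      (by convert hsep q hq using 3; rw [hc0]; ring)
  have hnH : |n * ((r 1 - s 1) / 2)| < |m| * ((p 0 - q 0) / 2) :=
    abs_mul_lt_of_add_mul_neg (hxbox r hr) (hxbox s hs)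
      (by convert hsep r hr using 1; rw [hc1]; ring)
      (by convert hsep s hs using 1; rw [hc1]; ring)
  rw [abs_mul, abs_of_nonneg hW] at hmW
  rw [abs_mul, abs_of_nonneg hH] at hnH
  linarith

lemma suppFn_eq_inner {K : Set (EuclideanSpace ℝ (Fin 2))} {x p : EuclideanSpace ℝ (Fin 2)}
    (hp : p ∈ K) (hmax : ∀ y ∈ K, inner ℝ x y ≤ inner ℝ x p) :
    suppFn K x = inner ℝ x p :=
  IsGreatest.csSup_eq ⟨Set.mem_image_of_mem _ hp, Set.forall_mem_image.mpr hmax⟩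

lemma suppFn_single {K : Set (EuclideanSpace ℝ (Fin 2))} {i : Fin 2}
    {p : EuclideanSpace ℝ (Fin 2)}
    (hp : p ∈ K) (hmax : IsMaxOn (· i) K p) : suppFn K (single i 1) = p i := by
  rw [suppFn_eq_inner hp fun y hy => by simpa [inner_single_left] using isMaxOn_iff.mp hmax y hy]
  simp [inner_single_left]

lemma suppFn_neg_single {K : Set (EuclideanSpace ℝ (Fin 2))} {i : Fin 2}
    {q : EuclideanSpace ℝ (Fin 2)} (hq : q ∈ K) (hmin : IsMinOn (· i) K q) :
    suppFn K (-single i 1) = -q i := by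
  rw [suppFn_eq_inner hq fun y hy => by simpa [inner_single_left] using isMinOn_iff.mp hmin y hy]
  simp [inner_single_left]

/-- For every nonempty compact convex `K ⊆ ℝ²`, the point
`((h_K(e₁) − h_K(−e₁))/2, (h_K(e₂) − h_K(−e₂))/2)` — the center of the
smallest axis-parallel rectangle containing `K` — belongs to `K`. -/
theorem simplest_labeling (K : Set (EuclideanSpace ℝ (Fin 2)))
    (hne : K.Nonempty) (hcomp : IsCompact K) (hconv : Convex ℝ K) :
    ((suppFn K (EuclideanSpace.single (0 : Fin 2) (1 : ℝ)) -
        suppFn K (-EuclideanSpace.single (0 : Fin 2) (1 : ℝ))) / 2) •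
        EuclideanSpace.single (0 : Fin 2) (1 : ℝ) +
      ((suppFn K (EuclideanSpace.single (1 : Fin 2) (1 : ℝ)) -
        suppFn K (-EuclideanSpace.single (1 : Fin 2) (1 : ℝ))) / 2) •
        EuclideanSpace.single (1 : Fin 2) (1 : ℝ) ∈ K := by
  have hcoord (i : Fin 2) : ContinuousOn (fun y : EuclideanSpace ℝ (Fin 2) => y i) K :=
    (proj i).continuous.continuousOn
  obtain ⟨p, hp, hpmax⟩ := hcomp.exists_isMaxOn hne (hcoord 0)
  obtain ⟨q, hq, hqmin⟩ := hcomp.exists_isMinOn hne (hcoord 0)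
  obtain ⟨r, hr, hrmax⟩ := hcomp.exists_isMaxOn hne (hcoord 1)
  obtain ⟨s, hs, hsmin⟩ := hcomp.exists_isMinOn hne (hcoord 1)
  rw [suppFn_single hp hpmax, suppFn_neg_single hq hqmin, suppFn_single hr hrmax,
    suppFn_neg_single hs hsmin]
  exact box_center_mem hconv hcomp.isClosed hp hq hr hs hpmax hqmin hrmax hsmin
    (by simp) (by simp)
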